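/- Let X and Y be nonnegative random variables with pdfs f and g continuous and strictly positive on (0, u*) and zero outside, for a common finite right endpoint u* = u_X = u_Y < ∞, and cdfs F and G. Suppose X ≤_disp Y, i.e., G^{-1}(F(x)) - x is increasing in x on (0, u*). Let w₁, w₂ be weight functions with w₁ increasing, w₁(x) ≥ w₂(x) ≥ 0 for all x ≥ 0, and ∫ w₁(x) f(x)^2 dx < ∞, ∫ w₂(x) g(x)^2 dx < ∞. Then for every integer n ≥ 1 and rank parameters a, b with 1 ≤ a, b ≤ n, J^{w₁}(X_PRSS^(n)) ≤ J^{w₂}(Y_PRSS^(n)). -/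

import Mathlib

open MeasureTheory Real Set
open Filter Topology

/-- The cdf associated with a pdf `f`. -/
noncomputable def cdfOf (f : ℝ → ℝ) (x : ℝ) : ℝ := ∫ t in Iic x, f t

/-- Quantile function `F⁻¹(u) = inf {x : F x ≥ u}`. -/
noncomputable def qf (F : ℝ → ℝ) (u : ℝ) : ℝ := sInf {x | u ≤ F x}

/-- pdf of the `i`-th order statistic of an i.i.d. sample of size `n` from pdf `f`, cdf `F`. -/
noncomputable def osPdf (f F : ℝ → ℝ) (i n : ℕ) (x : ℝ) : ℝ :=
  ((Nat.factorial n : ℝ) / ((Nat.factorial (i - 1) : ℝ) * (Nat.factorial (n - i) : ℝ))) *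
    F x ^ (i - 1) * (1 - F x) ^ (n - i) * f x

/-- `φ_{2i-1:2n-1}`, the pdf of a Beta(2i-1, 2n-2i+1) random variable. -/
noncomputable def betaPdf (i n : ℕ) (u : ℝ) : ℝ :=
  ((Nat.factorial (2 * n - 1) : ℝ) /
      ((Nat.factorial (2 * i - 2) : ℝ) * (Nat.factorial (2 * n - 2 * i) : ℝ))) *
    u ^ (2 * i - 2) * (1 - u) ^ (2 * n - 2 * i)

/-- The constant `C_{i,n}`. -/
noncomputable def Cin (i n : ℕ) : ℝ :=
  ((Nat.choose (2 * i - 2) (i - 1) : ℝ) * (Nat.choose (2 * n - 2 * i) (n - i) : ℝ)) /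
    (Nat.choose (2 * n - 1) (n - 1) : ℝ)

/-- General weighted extropy of the PRSS data with sample size `n` and rank parameters `a, b`. -/
noncomputable def Jprss (w f F : ℝ → ℝ) (n a b : ℕ) : ℝ :=
  if Even n then
    -(1 / 2) * (∫ x, w x * osPdf f F a n x ^ 2) ^ (n / 2) *
      (∫ x, w x * osPdf f F b n x ^ 2) ^ (n / 2)
  else
    -(1 / 2) * (∫ x, w x * osPdf f F a n x ^ 2) ^ ((n - 1) / 2) *
      (∫ x, w x * osPdf f F b n x ^ 2) ^ ((n - 1) / 2) *
      (∫ x, w x * osPdf f F ((n + 1) / 2) n x ^ 2)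

/-- pdf `ψ_{2i-1:2n}` of the (2i-1)-th order statistic of a standard exponential sample of size 2n. -/
noncomputable def expOsPdf (i n : ℕ) (x : ℝ) : ℝ :=
  ((Nat.factorial (2 * n) : ℝ) /
      ((Nat.factorial (2 * i - 2) : ℝ) * (Nat.factorial (2 * n - 2 * i + 1) : ℝ))) *
    (1 - Real.exp (-x)) ^ (2 * i - 2) * Real.exp (-(((2 * n - 2 * i + 2 : ℕ) : ℝ) * x))



section CdfFacts
variable {f : ℝ → ℝ} {ustar : ℝ}

lemma pdf_nonneg (hfpos : ∀ x ∈ Ioo 0 ustar, 0 < f x)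
    (hfzero : ∀ x ∉ Ioo 0 ustar, f x = 0) : ∀ x, 0 ≤ f x := by
  intro x
  by_cases h : x ∈ Ioo 0 ustar
  · exact (hfpos x h).le
  · simp [hfzero x h]

lemma cdf_nonneg (hf0 : ∀ x, 0 ≤ f x) (x : ℝ) : 0 ≤ cdfOf f x :=
  setIntegral_nonneg measurableSet_Iic (fun t _ => hf0 t)

lemma cdf_mono (hfint : Integrable f) (hf0 : ∀ x, 0 ≤ f x) : Monotone (cdfOf f) := by
  intro x y hxy
  exact setIntegral_mono_set hfint.integrableOn
    (Filter.Eventually.of_forall hf0) (HasSubset.Subset.eventuallyLE (Iic_subset_Iic.2 hxy))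

lemma cdf_of_nonpos (hfzero : ∀ x ∉ Ioo 0 ustar, f x = 0) {x : ℝ} (hx : x ≤ 0) :
    cdfOf f x = 0 := by
  rw [cdfOf]
  apply setIntegral_eq_zero_of_forall_eq_zero
  intro t ht
  exact hfzero t (fun hmem => absurd hmem.1 (not_lt.2 (le_trans (mem_Iic.1 ht) hx)))

lemma cdf_of_ge (hfzero : ∀ x ∉ Ioo 0 ustar, f x = 0) (hfint : Integrable f)
    (hfpdf : ∫ x, f x = 1) {x : ℝ} (hx : ustar ≤ x) : cdfOf f x = 1 := by
  have h := integral_add_compl (measurableSet_Iic (a := x)) hfint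
  have h2 : ∫ t in (Iic x)ᶜ, f t = 0 := by
    apply setIntegral_eq_zero_of_forall_eq_zero
    intro t ht
    rw [compl_Iic] at ht
    exact hfzero t (fun hmem => absurd hmem.2 (not_lt.2 (le_trans hx (mem_Ioi.1 ht).le)))
  rw [h2, add_zero, hfpdf] at h
  exact h

lemma cdf_sub (hfint : Integrable f) (x y : ℝ) :
    cdfOf f y - cdfOf f x = ∫ t in x..y, f t :=
  intervalIntegral.integral_Iic_sub_Iic hfint.integrableOn hfint.integrableOn

lemma cdf_continuous (hfint : Integrable f) : Continuous (cdfOf f) := by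
  have h : ∀ x, cdfOf f x = cdfOf f 0 + ∫ t in (0:ℝ)..x, f t := by
    intro x
    rw [← cdf_sub hfint 0 x]; ring
  have hc := (continuous_const (y := cdfOf f 0)).add (intervalIntegral.continuous_primitive
    (fun a b => hfint.intervalIntegrable) 0)
  have : (fun x => cdfOf f 0 + ∫ t in (0:ℝ)..x, f t) = cdfOf f := funext fun x => (h x).symm
  rw [← this]; exact hc

lemma cdf_strictMonoOn (hfc : ContinuousOn f (Ioo 0 ustar))
    (hfpos : ∀ x ∈ Ioo 0 ustar, 0 < f x) (hfint : Integrable f) :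
    StrictMonoOn (cdfOf f) (Icc 0 ustar) := by
  intro x hx y hy hxy
  rw [← sub_pos, cdf_sub hfint]
  exact intervalIntegral.intervalIntegral_pos_of_pos_on hfint.intervalIntegrable
    (fun t ht => hfpos t ⟨lt_of_le_of_lt hx.1 ht.1, lt_of_lt_of_le ht.2 hy.2⟩) hxy

lemma cdf_mem_Ioo (hu : 0 < ustar) (hfc : ContinuousOn f (Ioo 0 ustar))
    (hfpos : ∀ x ∈ Ioo 0 ustar, 0 < f x) (hfzero : ∀ x ∉ Ioo 0 ustar, f x = 0)
    (hfint : Integrable f) (hfpdf : ∫ x, f x = 1) {x : ℝ} (hx : x ∈ Ioo 0 ustar) :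
    cdfOf f x ∈ Ioo (0:ℝ) 1 := by
  constructor
  · have := cdf_strictMonoOn hfc hfpos hfint (left_mem_Icc.2 hu.le)
      ⟨hx.1.le, hx.2.le⟩ hx.1
    rwa [cdf_of_nonpos hfzero le_rfl] at this
  · have := cdf_strictMonoOn hfc hfpos hfint ⟨hx.1.le, hx.2.le⟩
      (right_mem_Icc.2 hu.le) hx.2
    rwa [cdf_of_ge hfzero hfint hfpdf le_rfl] at this

lemma cdf_hasDerivAt (hfc : ContinuousOn f (Ioo 0 ustar)) (hfint : Integrable f)
    {x : ℝ} (hx : x ∈ Ioo 0 ustar) : HasDerivAt (cdfOf f) (f x) x := by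
  have h : HasDerivAt (fun y => cdfOf f 0 + ∫ t in (0:ℝ)..y, f t) (f x) x := by
    apply HasDerivAt.const_add
    exact intervalIntegral.integral_hasDerivAt_right hfint.intervalIntegrable
      (hfc.stronglyMeasurableAtFilter isOpen_Ioo x hx) (hfc.continuousAt (isOpen_Ioo.mem_nhds hx))
  have heq : (fun y => cdfOf f 0 + ∫ t in (0:ℝ)..y, f t) = cdfOf f := by
    funext y; rw [← cdf_sub hfint 0 y]; ring
  rwa [heq] at h

end CdfFacts

section QfFacts
-- abstract hypotheses on a cdf G
variable {G : ℝ → ℝ} {ustar : ℝ}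

/-- basic facts bundle -/
structure CdfHyp (G : ℝ → ℝ) (ustar : ℝ) : Prop where
  cont : Continuous G
  mono : Monotone G
  zero : ∀ x ≤ 0, G x = 0
  one : ∀ x, ustar ≤ x → G x = 1
  smono : StrictMonoOn G (Icc 0 ustar)
  upos : 0 < ustar

namespace CdfHyp

lemma nonneg (h : CdfHyp G ustar) (x : ℝ) : 0 ≤ G x := by
  rcases le_or_gt x 0 with hx | hx
  · rw [h.zero x hx]
  · calc (0:ℝ) = G 0 := (h.zero 0 le_rfl).symm
      _ ≤ G x := h.mono hx.le

lemma le_one (h : CdfHyp G ustar) (x : ℝ) : G x ≤ 1 := by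
  rcases le_or_gt ustar x with hx | hx
  · rw [h.one x hx]
  · calc G x ≤ G ustar := h.mono hx.le
      _ = 1 := h.one ustar le_rfl

lemma bddBelow_set (h : CdfHyp G ustar) {u : ℝ} (hu : 0 < u) :
    BddBelow {x | u ≤ G x} := by
  refine ⟨0, fun x hx => ?_⟩
  by_contra hx0
  push_neg at hx0
  rw [mem_setOf_eq, h.zero x hx0.le] at hx
  exact absurd hx (not_le.2 hu)

lemma mem_set (h : CdfHyp G ustar) {u : ℝ} (hu : u ≤ 1) : ustar ∈ {x | u ≤ G x} := by
  rw [mem_setOf_eq, h.one ustar le_rfl]; exact hu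

/-- G(Q(u)) = u for u ∈ (0,1) -/
lemma cdf_qf (h : CdfHyp G ustar) {u : ℝ} (hu : u ∈ Ioo (0:ℝ) 1) :
    G (qf G u) = u := by
  set Q := qf G u with hQ
  have hclosed : IsClosed {x | u ≤ G x} := isClosed_le continuous_const h.cont
  have hmem : Q ∈ {x | u ≤ G x} :=
    hclosed.csInf_mem ⟨ustar, h.mem_set hu.2.le⟩ (h.bddBelow_set hu.1)
  have hge : u ≤ G Q := hmem
  rcases eq_or_lt_of_le hge with heq | hlt
  · exact heq.symm
  · exfalso
    have hQpos : 0 < Q := by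
      by_contra hQ0
      push_neg at hQ0
      rw [h.zero Q hQ0] at hlt
      exact absurd hu.1 (not_lt.2 hlt.le)
    have hIVT := intermediate_value_Icc hQpos.le h.cont.continuousOn
    have humem : u ∈ Icc (G 0) (G Q) := by
      rw [h.zero 0 le_rfl]; exact ⟨hu.1.le, hge⟩
    obtain ⟨z, hz, hGz⟩ := hIVT humem
    have hQz : Q ≤ z := csInf_le (h.bddBelow_set hu.1) (by rw [mem_setOf_eq, hGz])
    have hzQ : z = Q := le_antisymm hz.2 hQz
    rw [← hzQ, hGz] at hlt
    exact lt_irrefl u hlt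

lemma qf_mem_Ioo (h : CdfHyp G ustar) {u : ℝ} (hu : u ∈ Ioo (0:ℝ) 1) :
    qf G u ∈ Ioo 0 ustar := by
  have hGQ := h.cdf_qf hu
  constructor
  · by_contra h0
    push_neg at h0
    rw [h.zero _ h0] at hGQ
    exact absurd hu.1 (not_lt.2 hGQ.ge)
  · have hle : qf G u ≤ ustar := csInf_le (h.bddBelow_set hu.1) (h.mem_set hu.2.le)
    rcases eq_or_lt_of_le hle with heq | hlt
    · exfalso
      rw [heq, h.one ustar le_rfl] at hGQ
      exact absurd hGQ.symm (ne_of_lt hu.2)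
    · exact hlt

/-- Q(G(y)) = y for y ∈ (0, ustar) -/
lemma qf_cdf (h : CdfHyp G ustar) {y : ℝ} (hy : y ∈ Ioo 0 ustar)
    (hGy : G y ∈ Ioo (0:ℝ) 1) : qf G (G y) = y := by
  have hyS : y ∈ {x | G y ≤ G x} := by simp
  apply le_antisymm
  · exact csInf_le (h.bddBelow_set hGy.1) hyS
  · apply le_csInf ⟨y, hyS⟩
    intro x hx
    by_contra hxy
    push_neg at hxy
    have : G x < G y := by
      rcases le_or_gt x 0 with hx0 | hx0
      · rw [h.zero x hx0]; exact hGy.1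
      · exact h.smono ⟨hx0.le, (hxy.trans hy.2).le⟩ ⟨hy.1.le, hy.2.le⟩ hxy
    exact absurd hx (not_le.2 this)

lemma qf_continuousAt (h : CdfHyp G ustar) {u₀ : ℝ} (hu : u₀ ∈ Ioo (0:ℝ) 1) :
    ContinuousAt (qf G) u₀ := by
  set y₀ := qf G u₀ with hy₀def
  have hy₀ : y₀ ∈ Ioo 0 ustar := h.qf_mem_Ioo hu
  have hGy₀ : G y₀ = u₀ := h.cdf_qf hu
  rw [Metric.continuousAt_iff]
  intro ε hε
  set ε' := min ε (min y₀ (ustar - y₀)) / 2 with hε'def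
  have hε' : 0 < ε' := by
    apply div_pos _ (by norm_num)
    exact lt_min hε (lt_min hy₀.1 (sub_pos.2 hy₀.2))
  have hε'ε : ε' < ε := by
    have : ε' ≤ ε / 2 := by
      apply div_le_div_of_nonneg_right (min_le_left _ _) (by norm_num)
    linarith
  have hy1 : 0 < y₀ - ε' := by
    have : ε' ≤ y₀ / 2 := by
      apply div_le_div_of_nonneg_right (le_trans (min_le_right _ _) (min_le_left _ _)) (by norm_num)
    linarith [hy₀.1]
  have hy2 : y₀ + ε' < ustar := by
    have : ε' ≤ (ustar - y₀) / 2 := by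
      apply div_le_div_of_nonneg_right (le_trans (min_le_right _ _) (min_le_right _ _)) (by norm_num)
    linarith [hy₀.2]
  have hmem1 : y₀ - ε' ∈ Icc (0:ℝ) ustar := ⟨hy1.le, by linarith [hy₀.2]⟩
  have hmem2 : y₀ + ε' ∈ Icc (0:ℝ) ustar := ⟨by linarith [hy₀.1], hy2.le⟩
  have hmem0 : y₀ ∈ Icc (0:ℝ) ustar := ⟨hy₀.1.le, hy₀.2.le⟩
  have hG1 : G (y₀ - ε') < u₀ := by
    rw [← hGy₀]; exact h.smono hmem1 hmem0 (by linarith)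
  have hG2 : u₀ < G (y₀ + ε') := by
    rw [← hGy₀]; exact h.smono hmem0 hmem2 (by linarith)
  refine ⟨min (u₀ - G (y₀ - ε')) (G (y₀ + ε') - u₀), lt_min (by linarith) (by linarith), ?_⟩
  intro v hv
  rw [Real.dist_eq] at hv ⊢
  have hv1 : G (y₀ - ε') < v := by
    have := abs_lt.1 (lt_of_lt_of_le hv (min_le_left _ _))
    linarith [this.1]
  have hv2 : v < G (y₀ + ε') := by
    have := abs_lt.1 (lt_of_lt_of_le hv (min_le_right _ _))
    linarith [this.2]
  have hvpos : 0 < v := lt_of_le_of_lt (h.nonneg _) hv1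
  have hub : qf G v ≤ y₀ + ε' := csInf_le (h.bddBelow_set hvpos) hv2.le
  have hlb : y₀ - ε' ≤ qf G v := by
    apply le_csInf ⟨ustar, h.mem_set (hv2.le.trans (h.le_one _))⟩
    intro x hx
    by_contra hxy
    push_neg at hxy
    have : G x ≤ G (y₀ - ε') := h.mono hxy.le
    have hvx : v ≤ G x := hx
    exact absurd hvx (not_le.2 (lt_of_le_of_lt this hv1))
  rw [abs_lt]
  constructor <;> [linarith; linarith]

end CdfHyp
end QfFacts


lemma deriv_nonneg_of_monotoneOn {ψ : ℝ → ℝ} {s : Set ℝ} (hs : IsOpen s)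
    (hm : MonotoneOn ψ s) {x d : ℝ} (hx : x ∈ s) (hd : HasDerivAt ψ d x) : 0 ≤ d := by
  have h := (hd.hasDerivWithinAt (s := Ioi x))
  rw [hasDerivWithinAt_iff_tendsto_slope] at h
  have hne : (Ioi x) \ {x} = Ioi x := by
    ext y; simp (config := {contextual := true}) [mem_diff, ne_of_gt]
  rw [hne] at h
  refine ge_of_tendsto h ?_
  have hmem : s ∈ 𝓝[>] x := nhdsWithin_le_nhds (hs.mem_nhds hx)
  filter_upwards [hmem, self_mem_nhdsWithin] with y hy hy'
  rw [slope_def_field]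
  have hxy : x < y := hy'
  have := hm hx hy hxy.le
  have h2 : (0:ℝ) < y - x := by linarith
  apply div_nonneg (by linarith) h2.le


lemma key_nonneg (g w₂ : ℝ → ℝ) (ustar : ℝ)
    (hgzero : ∀ x ∉ Ioo 0 ustar, g x = 0)
    (hw : ∀ x ≥ (0:ℝ), 0 ≤ w₂ x) (i n : ℕ) :
    0 ≤ ∫ x, w₂ x * osPdf g (cdfOf g) i n x ^ 2 := by
  apply integral_nonneg
  intro x
  rcases le_or_gt 0 x with hx | hx
  · exact mul_nonneg (hw x hx) (sq_nonneg _)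
  · have hg : g x = 0 := hgzero x (fun h => absurd h.1 (not_lt.2 hx.le))
    simp [osPdf, hg]

lemma key_ineq
    (f g w₁ w₂ : ℝ → ℝ) (ustar : ℝ) (hu : 0 < ustar)
    (hfc : ContinuousOn f (Ioo 0 ustar)) (hfpos : ∀ x ∈ Ioo 0 ustar, 0 < f x)
    (hfzero : ∀ x ∉ Ioo 0 ustar, f x = 0) (hfint : Integrable f) (hfpdf : ∫ x, f x = 1)
    (hgc : ContinuousOn g (Ioo 0 ustar)) (hgpos : ∀ x ∈ Ioo 0 ustar, 0 < g x)
    (hgzero : ∀ x ∉ Ioo 0 ustar, g x = 0) (hgint : Integrable g) (hgpdf : ∫ x, g x = 1)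
    (hdisp : MonotoneOn (fun x => qf (cdfOf g) (cdfOf f x) - x) (Ioo 0 ustar))
    (hw₁mono : Monotone w₁)
    (hw : ∀ x ≥ (0:ℝ), 0 ≤ w₂ x ∧ w₂ x ≤ w₁ x)
    (hint₁ : Integrable (fun x => w₁ x * f x ^ 2))
    (hint₂ : Integrable (fun x => w₂ x * g x ^ 2))
    (i n : ℕ) :
    (∫ x, w₂ x * osPdf g (cdfOf g) i n x ^ 2) ≤ ∫ x, w₁ x * osPdf f (cdfOf f) i n x ^ 2 := by
  set F := cdfOf f with hFdef
  set G := cdfOf g with hGdef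
  set C : ℝ := (Nat.factorial n : ℝ) /
      ((Nat.factorial (i - 1) : ℝ) * (Nat.factorial (n - i) : ℝ)) with hCdef
  have hf0 : ∀ x, 0 ≤ f x := pdf_nonneg hfpos hfzero
  have hg0 : ∀ x, 0 ≤ g x := pdf_nonneg hgpos hgzero
  have hF : CdfHyp F ustar :=
    ⟨cdf_continuous hfint, cdf_mono hfint hf0, fun x hx => cdf_of_nonpos hfzero hx,
     fun x hx => cdf_of_ge hfzero hfint hfpdf hx, cdf_strictMonoOn hfc hfpos hfint, hu⟩
  have hG : CdfHyp G ustar :=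
    ⟨cdf_continuous hgint, cdf_mono hgint hg0, fun x hx => cdf_of_nonpos hgzero hx,
     fun x hx => cdf_of_ge hgzero hgint hgpdf hx, cdf_strictMonoOn hgc hgpos hgint, hu⟩
  have hFmem : ∀ x ∈ Ioo 0 ustar, F x ∈ Ioo (0:ℝ) 1 :=
    fun x hx => cdf_mem_Ioo hu hfc hfpos hfzero hfint hfpdf hx
  have hGmem : ∀ x ∈ Ioo 0 ustar, G x ∈ Ioo (0:ℝ) 1 :=
    fun x hx => cdf_mem_Ioo hu hgc hgpos hgzero hgint hgpdf hx
  set φ : ℝ → ℝ := fun x => qf G (F x) with hφdef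
  have hφmem : ∀ x ∈ Ioo 0 ustar, φ x ∈ Ioo 0 ustar := fun x hx => hG.qf_mem_Ioo (hFmem x hx)
  have hGφ : ∀ x ∈ Ioo 0 ustar, G (φ x) = F x := fun x hx => hG.cdf_qf (hFmem x hx)
  have hφmono : StrictMonoOn φ (Ioo 0 ustar) := by
    intro x hx y hy hxy
    have h1 : F x < F y := hF.smono ⟨hx.1.le, hx.2.le⟩ ⟨hy.1.le, hy.2.le⟩ hxy
    by_contra hc
    push_neg at hc
    have h2 := hG.mono hc
    rw [hGφ x hx, hGφ y hy] at h2
    exact absurd h1 (not_lt.2 h2)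
  have hφinj : InjOn φ (Ioo 0 ustar) := hφmono.injOn
  have hφderiv : ∀ x ∈ Ioo 0 ustar, HasDerivAt φ (f x / g (φ x)) x := by
    intro x hx
    have hgφ : 0 < g (φ x) := hgpos _ (hφmem x hx)
    have hQd : HasDerivAt (qf G) (g (φ x))⁻¹ (F x) := by
      apply HasDerivAt.of_local_left_inverse (hG.qf_continuousAt (hFmem x hx))
        (cdf_hasDerivAt hgc hgint (hφmem x hx)) hgφ.ne'
      filter_upwards [isOpen_Ioo.mem_nhds (hFmem x hx)] with u hu
      exact hG.cdf_qf hu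
    have hFd : HasDerivAt F (f x) x := cdf_hasDerivAt hfc hfint hx
    have h := hQd.comp x hFd
    rw [div_eq_inv_mul]; exact h
  have hφle : ∀ x ∈ Ioo 0 ustar, φ x ≤ x := by
    intro x hx
    by_contra hc
    push_neg at hc
    have hcpos : 0 < φ x - x := by linarith
    set y := max ((x + ustar) / 2) (ustar - (φ x - x) / 2) with hydef
    have hxy : x < y := lt_of_lt_of_le (by linarith [hx.2]) (le_max_left _ _)
    have hyu : y < ustar := max_lt (by linarith [hx.2]) (by linarith)
    have hys : y ∈ Ioo 0 ustar := ⟨hx.1.trans hxy, hyu⟩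
    have hmono : φ x - x ≤ φ y - y := hdisp hx hys hxy.le
    have hfyu : φ y < ustar := (hφmem y hys).2
    have hyge : ustar - (φ x - x) / 2 ≤ y := le_max_right _ _
    linarith
  have hgle : ∀ x ∈ Ioo 0 ustar, g (φ x) ≤ f x := by
    intro x hx
    have hgφ : 0 < g (φ x) := hgpos _ (hφmem x hx)
    have hd : HasDerivAt (fun x => qf G (F x) - x) (f x / g (φ x) - 1) x :=
      (hφderiv x hx).sub (hasDerivAt_id x)
    have h0 := deriv_nonneg_of_monotoneOn isOpen_Ioo hdisp hx hd
    have h1 : 1 ≤ f x / g (φ x) := by linarith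
    have := (one_le_div hgφ).mp h1
    linarith
  have hφsurj : Ioo 0 ustar ⊆ φ '' Ioo 0 ustar := by
    intro y hy
    have hGy : G y ∈ Ioo (0:ℝ) 1 := hGmem y hy
    have hIVT := intermediate_value_Icc hu.le (hF.cont.continuousOn (s := Icc 0 ustar))
    have hGymem : G y ∈ Icc (F 0) (F ustar) := by
      rw [hF.zero 0 le_rfl, hF.one ustar le_rfl]
      exact ⟨hGy.1.le, hGy.2.le⟩
    obtain ⟨x, hxmem, hFx⟩ := hIVT hGymem
    have hxs : x ∈ Ioo 0 ustar := by
      constructor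
      · rcases eq_or_lt_of_le hxmem.1 with h0 | h0
        · exfalso; rw [← h0, hF.zero 0 le_rfl] at hFx; exact absurd hFx.symm (ne_of_gt hGy.1)
        · exact h0
      · rcases eq_or_lt_of_le hxmem.2 with h0 | h0
        · exfalso; rw [h0, hF.one ustar le_rfl] at hFx
          exact absurd hFx.symm (ne_of_lt hGy.2)
        · exact h0
    refine ⟨x, hxs, ?_⟩
    show qf G (F x) = y
    rw [hFx]
    exact hG.qf_cdf hy hGy
  have hφimage : φ '' Ioo 0 ustar = Ioo 0 ustar :=
    Subset.antisymm (by rintro _ ⟨x, hx, rfl⟩; exact hφmem x hx) hφsurj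
  -- product-form rewriting
  have hHb : ∀ y, w₂ y * osPdf g G i n y ^ 2
      = (C ^ 2 * (G y ^ (i - 1)) ^ 2 * ((1 - G y) ^ (n - i)) ^ 2) * (w₂ y * g y ^ 2) := by
    intro y; simp only [osPdf, ← hCdef]; ring
  have hHa : ∀ x, w₁ x * osPdf f F i n x ^ 2
      = (C ^ 2 * (F x ^ (i - 1)) ^ 2 * ((1 - F x) ^ (n - i)) ^ 2) * (w₁ x * f x ^ 2) := by
    intro x; simp only [osPdf, ← hCdef]; ring
  have hC0 : 0 ≤ C := by positivity
  have hbd : ∀ (H : ℝ → ℝ), (∀ y, 0 ≤ H y) → (∀ y, H y ≤ 1) →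
      ∀ y, ‖C ^ 2 * (H y ^ (i - 1)) ^ 2 * ((1 - H y) ^ (n - i)) ^ 2‖ ≤ C ^ 2 := by
    intro H h0 h1 y
    have ha1 : (H y ^ (i - 1)) ^ 2 ≤ 1 :=
      pow_le_one₀ (pow_nonneg (h0 y) _) (pow_le_one₀ (h0 y) (h1 y))
    have hb1 : ((1 - H y) ^ (n - i)) ^ 2 ≤ 1 :=
      pow_le_one₀ (pow_nonneg (by linarith [h1 y]) _)
        (pow_le_one₀ (by linarith [h1 y]) (by linarith [h0 y]))
    have ha0 : 0 ≤ (H y ^ (i - 1)) ^ 2 := sq_nonneg _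
    have hb0 : 0 ≤ ((1 - H y) ^ (n - i)) ^ 2 := sq_nonneg _
    rw [Real.norm_eq_abs, abs_of_nonneg (by positivity)]
    have h3 : C ^ 2 * (H y ^ (i - 1)) ^ 2 * ((1 - H y) ^ (n - i)) ^ 2
        ≤ C ^ 2 * (H y ^ (i - 1)) ^ 2 * 1 :=
      mul_le_mul_of_nonneg_left hb1 (mul_nonneg (sq_nonneg C) ha0)
    have h4 : C ^ 2 * (H y ^ (i - 1)) ^ 2 ≤ C ^ 2 * 1 :=
      mul_le_mul_of_nonneg_left ha1 (sq_nonneg C)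
    linarith
  have hbint : Integrable (fun y =>
      (C ^ 2 * (G y ^ (i - 1)) ^ 2 * ((1 - G y) ^ (n - i)) ^ 2) * (w₂ y * g y ^ 2)) := by
    apply hint₂.bdd_mul (c := C ^ 2)
    · exact (((continuous_const.mul ((hG.cont.pow _).pow _)).mul
        (((continuous_const.sub hG.cont).pow _).pow _))).aestronglyMeasurable
    · exact Filter.Eventually.of_forall (hbd G hG.nonneg hG.le_one)
  have haint : Integrable (fun x =>
      (C ^ 2 * (F x ^ (i - 1)) ^ 2 * ((1 - F x) ^ (n - i)) ^ 2) * (w₁ x * f x ^ 2)) := by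
    apply hint₁.bdd_mul (c := C ^ 2)
    · exact (((continuous_const.mul ((hF.cont.pow _).pow _)).mul
        (((continuous_const.sub hF.cont).pow _).pow _))).aestronglyMeasurable
    · exact Filter.Eventually.of_forall (hbd F hF.nonneg hF.le_one)
  have hbint_s : IntegrableOn (fun y => w₂ y * osPdf g G i n y ^ 2) (Ioo 0 ustar) := by
    apply (hbint.integrableOn (s := Ioo 0 ustar)).congr_fun (fun y _ => (hHb y).symm)
      measurableSet_Ioo
  have haint_s : IntegrableOn (fun x => w₁ x * osPdf f F i n x ^ 2) (Ioo 0 ustar) := by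
    apply (haint.integrableOn (s := Ioo 0 ustar)).congr_fun (fun x _ => (hHa x).symm)
      measurableSet_Ioo
  have e1 : (∫ x, w₂ x * osPdf g G i n x ^ 2)
      = ∫ y in Ioo 0 ustar, w₂ y * osPdf g G i n y ^ 2 :=
    (setIntegral_eq_integral_of_forall_compl_eq_zero
      (fun x hx => by simp [osPdf, hgzero x hx])).symm
  have e4 : (∫ x in Ioo 0 ustar, w₁ x * osPdf f F i n x ^ 2)
      = ∫ x, w₁ x * osPdf f F i n x ^ 2 :=
    setIntegral_eq_integral_of_forall_compl_eq_zero
      (fun x hx => by simp [osPdf, hfzero x hx])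
  have e2 : (∫ y in Ioo 0 ustar, w₂ y * osPdf g G i n y ^ 2)
      = ∫ x in Ioo 0 ustar, |f x / g (φ x)| • (w₂ (φ x) * osPdf g G i n (φ x) ^ 2) := by
    conv_lhs => rw [← hφimage]
    exact integral_image_eq_integral_abs_deriv_smul measurableSet_Ioo
      (fun x hx => (hφderiv x hx).hasDerivWithinAt) hφinj
      (fun y => w₂ y * osPdf g G i n y ^ 2)
  have hLint : IntegrableOn
      (fun x => |f x / g (φ x)| • (w₂ (φ x) * osPdf g G i n (φ x) ^ 2)) (Ioo 0 ustar) := by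
    have := (integrableOn_image_iff_integrableOn_abs_deriv_smul measurableSet_Ioo
      (fun x hx => (hφderiv x hx).hasDerivWithinAt) hφinj
      (fun y => w₂ y * osPdf g G i n y ^ 2)).mp (by rw [hφimage]; exact hbint_s)
    exact this
  have hpt : ∀ x ∈ Ioo 0 ustar,
      |f x / g (φ x)| • (w₂ (φ x) * osPdf g G i n (φ x) ^ 2) ≤ w₁ x * osPdf f F i n x ^ 2 := by
    intro x hx
    have hφx := hφmem x hx
    have hgφ : 0 < g (φ x) := hgpos _ hφx
    have hfx : 0 < f x := hfpos _ hx
    have hGφx : G (φ x) = F x := hGφ x hx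
    have hw2 : 0 ≤ w₂ (φ x) := (hw _ hφx.1.le).1
    have hw21 : w₂ (φ x) ≤ w₁ (φ x) := (hw _ hφx.1.le).2
    have hw11 : w₁ (φ x) ≤ w₁ x := hw₁mono (hφle x hx)
    have hkey : w₂ (φ x) * g (φ x) ≤ w₁ x * f x :=
      mul_le_mul (hw21.trans hw11) (hgle x hx) hgφ.le (le_trans hw2 (hw21.trans hw11))
    rw [smul_eq_mul, abs_of_nonneg (div_nonneg hfx.le hgφ.le)]
    simp only [osPdf, ← hCdef, hGφx]
    have hgne : g (φ x) ≠ 0 := hgφ.ne'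
    have hexp1 : f x / g (φ x) *
        (w₂ (φ x) * (C * F x ^ (i - 1) * (1 - F x) ^ (n - i) * g (φ x)) ^ 2)
        = (w₂ (φ x) * g (φ x)) *
          (C ^ 2 * (F x ^ (i - 1)) ^ 2 * ((1 - F x) ^ (n - i)) ^ 2 * f x) := by
      field_simp
    have hexp2 : w₁ x * (C * F x ^ (i - 1) * (1 - F x) ^ (n - i) * f x) ^ 2
        = (w₁ x * f x) *
          (C ^ 2 * (F x ^ (i - 1)) ^ 2 * ((1 - F x) ^ (n - i)) ^ 2 * f x) := by ring
    rw [hexp1, hexp2]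
    have hKn : 0 ≤ C ^ 2 * (F x ^ (i - 1)) ^ 2 * ((1 - F x) ^ (n - i)) ^ 2 * f x :=
      mul_nonneg (by positivity) hfx.le
    exact mul_le_mul_of_nonneg_right hkey hKn
  have e3 := setIntegral_mono_on hLint haint_s measurableSet_Ioo hpt
  rw [e1, e2]
  exact e3.trans (le_of_eq e4)


/-- if `X ≤_disp Y` (common finite right endpoint), `w₁` increasing and
`w₁ ≥ w₂ ≥ 0`, then `J^{w₁}(X_PRSS) ≤ J^{w₂}(Y_PRSS)`. -/
theorem Jprss_le_of_disp
    (f g w₁ w₂ : ℝ → ℝ) (ustar : ℝ) (hu : 0 < ustar)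
    (hfc : ContinuousOn f (Ioo 0 ustar)) (hfpos : ∀ x ∈ Ioo 0 ustar, 0 < f x)
    (hfzero : ∀ x ∉ Ioo 0 ustar, f x = 0) (hfint : Integrable f) (hfpdf : ∫ x, f x = 1)
    (hgc : ContinuousOn g (Ioo 0 ustar)) (hgpos : ∀ x ∈ Ioo 0 ustar, 0 < g x)
    (hgzero : ∀ x ∉ Ioo 0 ustar, g x = 0) (hgint : Integrable g) (hgpdf : ∫ x, g x = 1)
    (hdisp : MonotoneOn (fun x => qf (cdfOf g) (cdfOf f x) - x) (Ioo 0 ustar))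
    (hw₁mono : Monotone w₁)
    (hw : ∀ x ≥ (0:ℝ), 0 ≤ w₂ x ∧ w₂ x ≤ w₁ x)
    (hint₁ : Integrable (fun x => w₁ x * f x ^ 2))
    (hint₂ : Integrable (fun x => w₂ x * g x ^ 2)) :
    ∀ n : ℕ, 1 ≤ n → ∀ a b : ℕ, 1 ≤ a → a ≤ n → 1 ≤ b → b ≤ n →
      Jprss w₁ f (cdfOf f) n a b ≤ Jprss w₂ g (cdfOf g) n a b := by
  intro n _ a b _ _ _ _
  have key : ∀ i : ℕ, (∫ x, w₂ x * osPdf g (cdfOf g) i n x ^ 2)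
      ≤ ∫ x, w₁ x * osPdf f (cdfOf f) i n x ^ 2 := fun i =>
    key_ineq f g w₁ w₂ ustar hu hfc hfpos hfzero hfint hfpdf hgc hgpos hgzero hgint hgpdf
      hdisp hw₁mono hw hint₁ hint₂ i n
  have nn : ∀ i : ℕ, 0 ≤ ∫ x, w₂ x * osPdf g (cdfOf g) i n x ^ 2 := fun i =>
    key_nonneg g w₂ ustar hgzero (fun x hx => (hw x hx).1) i n
  unfold Jprss
  by_cases hpar : Even n
  · simp only [if_pos hpar]
    have h1 : (∫ x, w₂ x * osPdf g (cdfOf g) a n x ^ 2) ^ (n / 2)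
        ≤ (∫ x, w₁ x * osPdf f (cdfOf f) a n x ^ 2) ^ (n / 2) :=
      pow_le_pow_left₀ (nn a) (key a) _
    have h2 : (∫ x, w₂ x * osPdf g (cdfOf g) b n x ^ 2) ^ (n / 2)
        ≤ (∫ x, w₁ x * osPdf f (cdfOf f) b n x ^ 2) ^ (n / 2) :=
      pow_le_pow_left₀ (nn b) (key b) _
    have hb0 : 0 ≤ (∫ x, w₂ x * osPdf g (cdfOf g) b n x ^ 2) ^ (n / 2) := pow_nonneg (nn b) _
    have ha0 : 0 ≤ (∫ x, w₂ x * osPdf g (cdfOf g) a n x ^ 2) ^ (n / 2) := pow_nonneg (nn a) _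
    have hmul := mul_le_mul h1 h2 hb0 (ha0.trans h1)
    nlinarith [hmul]
  · simp only [if_neg hpar]
    have h1 : (∫ x, w₂ x * osPdf g (cdfOf g) a n x ^ 2) ^ ((n - 1) / 2)
        ≤ (∫ x, w₁ x * osPdf f (cdfOf f) a n x ^ 2) ^ ((n - 1) / 2) :=
      pow_le_pow_left₀ (nn a) (key a) _
    have h2 : (∫ x, w₂ x * osPdf g (cdfOf g) b n x ^ 2) ^ ((n - 1) / 2)
        ≤ (∫ x, w₁ x * osPdf f (cdfOf f) b n x ^ 2) ^ ((n - 1) / 2) :=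
      pow_le_pow_left₀ (nn b) (key b) _
    have hb0 : 0 ≤ (∫ x, w₂ x * osPdf g (cdfOf g) b n x ^ 2) ^ ((n - 1) / 2) :=
      pow_nonneg (nn b) _
    have ha0 : 0 ≤ (∫ x, w₂ x * osPdf g (cdfOf g) a n x ^ 2) ^ ((n - 1) / 2) :=
      pow_nonneg (nn a) _
    have hmul := mul_le_mul h1 h2 hb0 (ha0.trans h1)
    have hm := key ((n + 1) / 2)
    have hm0 := nn ((n + 1) / 2)
    have hmul3 := mul_le_mul hmul hm hm0 (mul_nonneg (ha0.trans h1) (hb0.trans h2))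
    nlinarith [hmul3]
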